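/- arXiv:1004.1476 — 2 statements merged into one kernel-verified Lean document; each statement's English description precedes it below -/
import Mathlib

section
/- Let 1 ≤ q < 2, let V be a real Banach space, let ω be a control function, let ε ≥ 0, and let Ω, Ω̂ ∈ C_{0,q}(L(V,V)) satisfy ‖Ω(t) − Ω(s)‖ ≤ ω(s,t)^{1/q}, ‖Ω̂(t) − Ω̂(s)‖ ≤ ω(s,t)^{1/q}, and ‖(Ω(t) − Ω(s)) − (Ω̂(t) − Ω̂(s))‖ ≤ ε ω(s,t)^{1/q} for all 0 ≤ s ≤ t ≤ 1. Let M and M̂ be the unique continuous finite q-variation solutions with M(0) = M̂(0) = Id_V of M(t) − M(s) = ∫_s^t dΩ · M and M̂(t) − M̂(s) = ∫_s^t dΩ̂ · M̂ (Young integrals, i.e. limits of left-point Riemann–Stieltjes sums Σ (Ω(t_i) − Ω(t_{i−1})) ∘ M(t_{i−1}) as the mesh tends to 0). Then there exists a constant C > 0 depending only on q and ω(0,1) such that ‖(M(t) − M(s)) − (M̂(t) − M̂(s))‖ ≤ C ε ω(s,t)^{1/q} for all 0 ≤ s ≤ t ≤ 1. -/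
/-!
The difference `D = M - M̂` solves the inhomogeneous linear equation `dD = dΩ · D + d(Ω - Ω̂) · M̂`.
On an interval `[a,b]` where `ω(a,b)` is small, the sewing lemma (Young–Loève estimate) turns a
bound `‖D(y) - D(x)‖ ≤ c ω(x,y)^{1/q}` on `[a,b]` into the same bound with constant
`‖D(a)‖ + O(ε) + c/2`; iterating from the a priori bound that finite `q`-variation provides gives
the constant `2 (‖D(a)‖ + O(ε))`. Cutting `[0,1]` into about `ω(0,1)` such intervals, the values at
the cut points at most double from one piece to the next, so the global constant depends only on
`q` and `ω(0,1)`. The same argument for the homogeneous equation first bounds `M` and `M̂`, which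
makes the `O(ε)` term uniform.
-/

universe u

/-- A finite partition of the interval `[s,t]`: monotone points `pt 0 = s ≤ ⋯ ≤ pt N = t`. -/
structure Subdivision (s t : ℝ) where
  N : ℕ
  pt : ℕ → ℝ
  pos : 0 < N
  first : pt 0 = s
  last : pt N = t
  mono : ∀ i, i < N → pt i ≤ pt (i + 1)

/-- The mesh of a partition: the largest length of a subinterval. -/
noncomputable def Subdivision.mesh {s t : ℝ} (P : Subdivision s t) : ℝ :=
  (Finset.range P.N).sup' (Finset.nonempty_range_iff.mpr P.pos.ne')
    (fun i => P.pt (i + 1) - P.pt i)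

/-- A control function on the simplex `Δ = {0 ≤ s ≤ t ≤ 1}`. -/
def IsControl (ω : ℝ → ℝ → ℝ) : Prop :=
  ContinuousOn (fun p : ℝ × ℝ => ω p.1 p.2) {p : ℝ × ℝ | 0 ≤ p.1 ∧ p.1 ≤ p.2 ∧ p.2 ≤ 1} ∧
  (∀ t, 0 ≤ t → t ≤ 1 → ω t t = 0) ∧
  (∀ s t, 0 ≤ s → s ≤ t → t ≤ 1 → 0 ≤ ω s t) ∧
  (∀ s u t, 0 ≤ s → s ≤ u → u ≤ t → t ≤ 1 → ω s u + ω u t ≤ ω s t)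

/-- A path has finite `q`-variation on `[0,1]`. -/
def FiniteQVar {E : Type u} [NormedAddCommGroup E] (q : ℝ) (X : ℝ → E) : Prop :=
  ∃ B : ℝ, ∀ P : Subdivision 0 1,
    (∑ i ∈ Finset.range P.N, ‖X (P.pt (i + 1)) - X (P.pt i)‖ ^ q) ≤ B

/-- `X ∈ C_{0,q}(E)`: continuous on `[0,1]`, starting at `0`, of finite `q`-variation. -/
def MemC0q {E : Type u} [NormedAddCommGroup E] (q : ℝ) (X : ℝ → E) : Prop :=
  ContinuousOn X (Set.Icc 0 1) ∧ X 0 = 0 ∧ FiniteQVar q X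

/-- `L = ∫_s^t dΩ · G` in the sense of left-point Riemann–Stieltjes sums: the sums
`∑ (Ω(t_i) − Ω(t_{i−1})) ∘ G(t_{i−1})` over partitions of `[s,t]` converge to `L` as the
mesh tends to `0`. -/
def RSLimit {V : Type u} [NormedAddCommGroup V] [NormedSpace ℝ V]
    (Ω G : ℝ → V →L[ℝ] V) (s t : ℝ) (L : V →L[ℝ] V) : Prop :=
  ∀ ε > (0 : ℝ), ∃ δ > (0 : ℝ), ∀ P : Subdivision s t, P.mesh < δ →
    ‖(∑ i ∈ Finset.range P.N, (Ω (P.pt (i + 1)) - Ω (P.pt i)).comp (G (P.pt i))) - L‖ ≤ ε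

/-- `M` solves `dM = dΩ · M` on `[0,1]` in the Young sense: for all `0 ≤ s ≤ t ≤ 1` the Young
integral `∫_s^t dΩ · M` exists and equals `M(t) − M(s)`. -/
def SolvesLinearODE {V : Type u} [NormedAddCommGroup V] [NormedSpace ℝ V]
    (Ω M : ℝ → V →L[ℝ] V) : Prop :=
  ∀ s t, 0 ≤ s → s ≤ t → t ≤ 1 → RSLimit Ω M s t (M t - M s)

open Filter Topology

namespace Subdivision

variable {s u t : ℝ}

theorem pt_le_pt (P : Subdivision s t) {i j : ℕ} (hij : i ≤ j) (hj : j ≤ P.N) :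
    P.pt i ≤ P.pt j := by
  induction j, hij using Nat.le_induction with
  | base => rfl
  | succ j hij ih => exact (ih (by omega)).trans (P.mono j (by omega))

theorem left_le_pt (P : Subdivision s t) {i : ℕ} (hi : i ≤ P.N) : s ≤ P.pt i := by
  simpa [P.first] using P.pt_le_pt (Nat.zero_le i) hi

theorem pt_le_right (P : Subdivision s t) {i : ℕ} (hi : i ≤ P.N) : P.pt i ≤ t := by
  simpa [P.last] using P.pt_le_pt hi le_rfl

theorem left_le_right (P : Subdivision s t) : s ≤ t :=
  P.last ▸ P.left_le_pt le_rfl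

def sum {E : Type*} [AddCommMonoid E] (P : Subdivision s t) (f : ℝ → ℝ → E) : E :=
  ∑ i ∈ Finset.range P.N, f (P.pt i) (P.pt (i + 1))

def single (h : s ≤ t) : Subdivision s t where
  N := 1
  pt i := if i = 0 then s else t
  pos := one_pos
  first := rfl
  last := rfl
  mono i hi := by simp [Nat.lt_one_iff.mp hi, h]

def append (P : Subdivision s u) (Q : Subdivision u t) : Subdivision s t where
  N := P.N + Q.N
  pt i := if i ≤ P.N then P.pt i else Q.pt (i - P.N)
  pos := by have := P.pos; omega
  first := by simp [P.first]
  last := by simp [Q.pos.ne', Q.last]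
  mono i hi := by
    rcases lt_trichotomy i P.N with hlt | rfl | hgt
    · simp only [hlt.le, show i + 1 ≤ P.N by omega, if_true]
      exact P.mono i hlt
    · simpa [P.last, ← Q.first] using Q.mono 0 Q.pos
    · simp only [show ¬ i ≤ P.N by omega, show ¬ i + 1 ≤ P.N by omega, if_false,
        show i + 1 - P.N = i - P.N + 1 by omega]
      exact Q.mono _ (by omega)

def eraseAt (P : Subdivision s t) (i : ℕ) (hi : 0 < i) (hiN : i < P.N) : Subdivision s t where
  N := P.N - 1
  pt j := P.pt (if j < i then j else j + 1)
  pos := by omega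
  first := by simp [hi, P.first]
  last := by simp [show ¬ P.N - 1 < i by omega, show P.N - 1 + 1 = P.N by omega, P.last]
  mono j hj := P.pt_le_pt (by split_ifs <;> omega) (by split_ifs <;> omega)

noncomputable def uniform (h : s ≤ t) (n : ℕ) : Subdivision s t where
  N := n + 1
  pt i := s + (t - s) * i / (n + 1)
  pos := n.succ_pos
  first := by simp
  last := by push_cast; field_simp; ring
  mono i _ := by
    have : 0 ≤ t - s := sub_nonneg.mpr h
    gcongr
    linarith

section sum

variable {E : Type*}

theorem sum_single [AddCommMonoid E] (h : s ≤ t) (f : ℝ → ℝ → E) :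
    (single h).sum f = f s t := by
  simp [sum, single]

theorem sum_append [AddCommMonoid E] (P : Subdivision s u) (Q : Subdivision u t)
    (f : ℝ → ℝ → E) : (P.append Q).sum f = P.sum f + Q.sum f := by
  simp only [sum, append]
  rw [Finset.sum_range_add]
  congr 1
  · refine Finset.sum_congr rfl fun i hi => ?_
    have := Finset.mem_range.mp hi
    simp [show i ≤ P.N by omega, show i + 1 ≤ P.N by omega]
  · refine Finset.sum_congr rfl fun i _ => ?_
    rcases Nat.eq_zero_or_pos i with rfl | hi
    · simp [P.last, Q.first]
    · simp [show ¬ P.N + i ≤ P.N by omega, show P.N + i + 1 - P.N = i + 1 by omega]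

theorem sum_eraseAt [AddCommGroup E] (P : Subdivision s t) {i : ℕ} (hi : i + 1 < P.N)
    (f : ℝ → ℝ → E) :
    (P.eraseAt (i + 1) i.succ_pos hi).sum f = P.sum f
      - (f (P.pt i) (P.pt (i + 1)) + f (P.pt (i + 1)) (P.pt (i + 2))
        - f (P.pt i) (P.pt (i + 2))) := by
  obtain ⟨k, hk⟩ : ∃ k, P.N = i + 1 + 1 + k := ⟨P.N - (i + 2), by omega⟩
  simp only [sum, eraseAt]
  rw [show P.N - 1 = i + 1 + k by omega, hk]
  simp only [Finset.sum_range_add, Finset.sum_range_succ]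
  have hlow : ∀ j ∈ Finset.range i,
      f (P.pt (if j < i + 1 then j else j + 1)) (P.pt (if j + 1 < i + 1 then j + 1 else j + 1 + 1))
        = f (P.pt j) (P.pt (j + 1)) := fun j hj => by
    have := Finset.mem_range.mp hj
    simp [show j < i + 1 by omega, show j + 1 < i + 1 by omega]
  have hhigh : ∀ j ∈ Finset.range k,
      f (P.pt (if i + 1 + j < i + 1 then i + 1 + j else i + 1 + j + 1))
        (P.pt (if i + 1 + j + 1 < i + 1 then i + 1 + j + 1 else i + 1 + j + 1 + 1))
        = f (P.pt (i + 1 + 1 + j)) (P.pt (i + 1 + 1 + j + 1)) := fun j _ => by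
    simp only [show ¬ i + 1 + j < i + 1 by omega, show ¬ i + 1 + j + 1 < i + 1 by omega, if_false]
    ring_nf
  rw [Finset.sum_congr rfl hlow, Finset.sum_congr rfl hhigh]
  simp only [show i < i + 1 by omega, show ¬ i + 1 < i + 1 by omega, if_true, if_false]
  abel

end sum

theorem mesh_uniform (h : s ≤ t) (n : ℕ) : (uniform h n).mesh = (t - s) / (n + 1) := by
  have hstep : ∀ i, (uniform h n).pt (i + 1) - (uniform h n).pt i = (t - s) / (n + 1) := by
    intro i
    simp only [uniform]
    push_cast
    ring
  simp only [mesh, hstep]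
  exact Finset.sup'_const _ _

noncomputable def fine (s t : ℝ) : Filter (Subdivision s t) := comap mesh (𝓝 0)

theorem fine_neBot (h : s ≤ t) : (fine s t).NeBot := by
  refine comap_neBot fun U hU => ?_
  have : Tendsto (fun n : ℕ => (uniform h n).mesh) atTop (𝓝 0) := by
    have := (tendsto_one_div_add_atTop_nhds_zero_nat (𝕜 := ℝ)).const_mul (t - s)
    rw [mul_zero] at this
    refine this.congr fun n => ?_
    rw [mesh_uniform]
    ring
  obtain ⟨n, hn⟩ := (this.eventually hU).exists
  exact ⟨_, hn⟩

theorem norm_sub_le_of_tendsto {E : Type*} [SeminormedAddCommGroup E] (h : s ≤ t)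
    {f : Subdivision s t → E} {L A : E} {R : ℝ} (hf : Tendsto f (fine s t) (𝓝 L))
    (hR : ∀ P, ‖f P - A‖ ≤ R) : ‖L - A‖ ≤ R :=
  haveI := fine_neBot h
  le_of_tendsto ((hf.sub_const A).norm) (Eventually.of_forall hR)

end Subdivision

structure IsSuperadditiveOn (χ : ℝ → ℝ → ℝ) (s t : ℝ) : Prop where
  nonneg : ∀ x y, s ≤ x → x ≤ y → y ≤ t → 0 ≤ χ x y
  add_le : ∀ x y z, s ≤ x → x ≤ y → y ≤ z → z ≤ t → χ x y + χ y z ≤ χ x z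

namespace IsSuperadditiveOn

variable {χ χ' : ℝ → ℝ → ℝ} {s t a b x y : ℝ}

theorem mono (h : IsSuperadditiveOn χ s t) (hsa : s ≤ a) (hax : a ≤ x) (hxy : x ≤ y)
    (hyb : y ≤ b) (hbt : b ≤ t) : χ x y ≤ χ a b := by
  have := h.add_le a x y hsa hax hxy (by linarith)
  have := h.add_le a y b hsa (hax.trans hxy) hyb hbt
  have := h.nonneg a x hsa hax (by linarith)
  have := h.nonneg y b (by linarith) hyb hbt
  linarith

theorem rpow_mono (h : IsSuperadditiveOn χ s t) (hsa : s ≤ a) (hax : a ≤ x) (hxy : x ≤ y)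
    (hyb : y ≤ b) (hbt : b ≤ t) {p : ℝ} (hp : 0 ≤ p) : χ x y ^ p ≤ χ a b ^ p :=
  Real.rpow_le_rpow (h.nonneg x y (hsa.trans hax) hxy (hyb.trans hbt))
    (h.mono hsa hax hxy hyb hbt) hp

theorem subinterval (h : IsSuperadditiveOn χ s t) (hsa : s ≤ a) (hbt : b ≤ t) :
    IsSuperadditiveOn χ a b where
  nonneg x y hx hxy hy := h.nonneg x y (hsa.trans hx) hxy (hy.trans hbt)
  add_le x y z hx hxy hyz hz := h.add_le x y z (hsa.trans hx) hxy hyz (hz.trans hbt)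

theorem sqrt_mul (h : IsSuperadditiveOn χ s t) (h' : IsSuperadditiveOn χ' s t) :
    IsSuperadditiveOn (fun x y => √(χ x y * χ' x y)) s t where
  nonneg _ _ _ _ _ := Real.sqrt_nonneg _
  add_le x y z hx hxy hyz hz := by
    have hy : y ≤ t := hyz.trans hz
    have hsy : s ≤ y := hx.trans hxy
    have cs := Real.sum_sqrt_mul_sqrt_le Finset.univ (f := ![χ x y, χ y z])
      (g := ![χ' x y, χ' y z]) (fun i => by fin_cases i <;> simp [h.nonneg, *])
      (fun i => by fin_cases i <;> simp [h'.nonneg, *])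
    simp only [Fin.sum_univ_two, Matrix.cons_val_zero, Matrix.cons_val_one] at cs
    rw [Real.sqrt_mul (h.nonneg x y hx hxy hy), Real.sqrt_mul (h.nonneg y z hsy hyz hz),
      Real.sqrt_mul (h.nonneg x z hx (hxy.trans hyz) hz)]
    refine cs.trans (mul_le_mul (Real.sqrt_le_sqrt (h.add_le x y z hx hxy hyz hz))
      (Real.sqrt_le_sqrt (h'.add_le x y z hx hxy hyz hz)) (Real.sqrt_nonneg _)
      (Real.sqrt_nonneg _))

/-- Overlapping pairs of consecutive intervals cover `[s,t]` at most twice. -/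
theorem sum_pt_add_two_le (h : IsSuperadditiveOn χ s t) (P : Subdivision s t) :
    ∀ n, n + 1 ≤ P.N → ∑ i ∈ Finset.range n, χ (P.pt i) (P.pt (i + 2))
      ≤ χ (P.pt 0) (P.pt (n + 1)) + χ (P.pt 0) (P.pt n) := by
  intro n hn
  induction n with
  | zero =>
    rw [Finset.sum_range_zero]
    exact add_nonneg
      (h.nonneg _ _ (P.left_le_pt (by omega)) (P.pt_le_pt (by omega) hn) (P.pt_le_right hn))
      (h.nonneg _ _ (P.left_le_pt (by omega)) le_rfl (P.pt_le_right (by omega)))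
  | succ n ih =>
    have := h.add_le (P.pt 0) (P.pt n) (P.pt (n + 2)) (P.left_le_pt (by omega))
      (P.pt_le_pt (by omega) (by omega)) (P.pt_le_pt (by omega) (by omega)) (P.pt_le_right hn)
    rw [Finset.sum_range_succ]
    linarith [ih (by omega)]

theorem exists_pt_add_two_le (h : IsSuperadditiveOn χ s t) (P : Subdivision s t)
    (hN : 2 ≤ P.N) :
    ∃ i, i + 2 ≤ P.N ∧ ((P.N : ℝ) - 1) * χ (P.pt i) (P.pt (i + 2)) ≤ 2 * χ s t := by
  obtain ⟨i, hi, hmin⟩ := Finset.exists_min_image (Finset.range (P.N - 1))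
    (fun i => χ (P.pt i) (P.pt (i + 2))) (Finset.nonempty_range_iff.mpr (by omega))
  refine ⟨i, by have := Finset.mem_range.mp hi; omega, ?_⟩
  have hcard := Finset.card_nsmul_le_sum _ _ _ hmin
  rw [Finset.card_range, nsmul_eq_mul, Nat.cast_sub (by omega), Nat.cast_one] at hcard
  have hchain := h.sum_pt_add_two_le P (P.N - 1) (by omega)
  rw [show P.N - 1 + 1 = P.N by omega, P.first, P.last] at hchain
  have := h.mono le_rfl le_rfl (P.left_le_pt (i := P.N - 1) (by omega))
    (P.pt_le_right (by omega)) le_rfl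
  linarith

end IsSuperadditiveOn

noncomputable def sewingConst (θ : ℝ) : ℝ := 2 ^ θ * ∑' k : ℕ, (((k : ℝ) + 1) ^ θ)⁻¹

theorem sewingConst_nonneg (θ : ℝ) : 0 ≤ sewingConst θ :=
  mul_nonneg (by positivity) (tsum_nonneg fun _ => by positivity)

theorem summable_add_one_rpow_inv {θ : ℝ} (hθ : 1 < θ) :
    Summable fun k : ℕ => (((k : ℝ) + 1) ^ θ)⁻¹ := by
  simpa using (summable_nat_add_iff 1).mpr (Real.summable_nat_rpow_inv.mpr hθ)

theorem Subdivision.exists_norm_sum_sub_sum_le {E : Type*} [SeminormedAddCommGroup E]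
    {χ : ℝ → ℝ → ℝ} {s t θ c : ℝ} (hχ : IsSuperadditiveOn χ s t) (hθ : 0 ≤ θ) (hc : 0 ≤ c)
    {Ξ : ℝ → ℝ → E}
    (hΞ : ∀ x y z, s ≤ x → x ≤ y → y ≤ z → z ≤ t → ‖Ξ x z - Ξ x y - Ξ y z‖ ≤ c * χ x z ^ θ)
    (P : Subdivision s t) (hN : 2 ≤ P.N) :
    ∃ Q : Subdivision s t, Q.N = P.N - 1 ∧
      ‖P.sum Ξ - Q.sum Ξ‖ ≤ c * (2 * χ s t / ((P.N : ℝ) - 1)) ^ θ := by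
  obtain ⟨i, hi, hgood⟩ := hχ.exists_pt_add_two_le P hN
  refine ⟨P.eraseAt (i + 1) i.succ_pos (by omega), rfl, ?_⟩
  have hsx := P.left_le_pt (i := i) (by omega)
  have hxy := P.pt_le_pt (show i ≤ i + 1 by omega) (by omega)
  have hyz := P.pt_le_pt (show i + 1 ≤ i + 2 by omega) hi
  have hzt := P.pt_le_right hi
  have hN1 : (0 : ℝ) < P.N - 1 := by
    have : (2 : ℝ) ≤ P.N := by exact_mod_cast hN
    linarith
  rw [Subdivision.sum_eraseAt, sub_sub_cancel, ← norm_neg]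
  calc ‖-(Ξ (P.pt i) (P.pt (i + 1)) + Ξ (P.pt (i + 1)) (P.pt (i + 2)) - Ξ (P.pt i) (P.pt (i + 2)))‖
      = ‖Ξ (P.pt i) (P.pt (i + 2)) - Ξ (P.pt i) (P.pt (i + 1))
          - Ξ (P.pt (i + 1)) (P.pt (i + 2))‖ := by
        congr 1
        abel
    _ ≤ c * χ (P.pt i) (P.pt (i + 2)) ^ θ := hΞ _ _ _ hsx hxy hyz hzt
    _ ≤ c * (2 * χ s t / ((P.N : ℝ) - 1)) ^ θ := by
        gcongr
        · exact hχ.nonneg _ _ hsx (hxy.trans hyz) hzt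
        · rw [le_div_iff₀ hN1]
          linarith

/-- The sewing lemma. Points are deleted one at a time, each time one whose two adjacent
intervals carry the least `χ`-mass. -/
theorem Subdivision.norm_sum_sub_le {E : Type*} [SeminormedAddCommGroup E]
    {χ : ℝ → ℝ → ℝ} {s t θ c : ℝ} (hχ : IsSuperadditiveOn χ s t) (hθ : 1 < θ) (hc : 0 ≤ c)
    (Ξ : ℝ → ℝ → E)
    (hΞ : ∀ x y z, s ≤ x → x ≤ y → y ≤ z → z ≤ t → ‖Ξ x z - Ξ x y - Ξ y z‖ ≤ c * χ x z ^ θ)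
    (P : Subdivision s t) :
    ‖P.sum Ξ - Ξ s t‖ ≤ c * sewingConst θ * χ s t ^ θ := by
  have hχst : 0 ≤ χ s t := hχ.nonneg s t le_rfl P.left_le_right le_rfl
  suffices H : ∀ (N : ℕ) (P : Subdivision s t), P.N = N + 1 →
      ‖P.sum Ξ - Ξ s t‖ ≤ c * 2 ^ θ * χ s t ^ θ * ∑ k ∈ Finset.range N, (((k : ℝ) + 1) ^ θ)⁻¹ by
    refine (H (P.N - 1) P (by have := P.pos; omega)).trans ?_
    rw [sewingConst, ← mul_assoc, mul_right_comm (c * 2 ^ θ)]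
    gcongr
    exact (summable_add_one_rpow_inv hθ).sum_le_tsum _ fun _ _ => by positivity
  intro N
  induction N with
  | zero =>
    intro P hP
    simp [Subdivision.sum, hP, ← P.first, ← hP ▸ P.last]
  | succ N ih =>
    intro P hP
    obtain ⟨Q, hQN, hQ⟩ := P.exists_norm_sum_sub_sum_le hχ (by linarith) hc hΞ (by omega)
    rw [hP, show ((N + 1 + 1 : ℕ) : ℝ) - 1 = N + 1 by push_cast; ring,
      Real.div_rpow (by positivity) (by positivity), Real.mul_rpow (by norm_num) hχst] at hQ
    calc ‖P.sum Ξ - Ξ s t‖ ≤ ‖P.sum Ξ - Q.sum Ξ‖ + ‖Q.sum Ξ - Ξ s t‖ :=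
          norm_sub_le_norm_sub_add_norm_sub _ _ _
      _ ≤ c * (2 ^ θ * χ s t ^ θ / ((N : ℝ) + 1) ^ θ)
            + c * 2 ^ θ * χ s t ^ θ * ∑ k ∈ Finset.range N, (((k : ℝ) + 1) ^ θ)⁻¹ :=
          add_le_add hQ (ih Q (by omega))
      _ = c * 2 ^ θ * χ s t ^ θ * ∑ k ∈ Finset.range (N + 1), (((k : ℝ) + 1) ^ θ)⁻¹ := by
          rw [Finset.sum_range_succ]
          ring

def ControlledOn {E : Type*} [SeminormedAddCommGroup E] (ω : ℝ → ℝ → ℝ) (q c : ℝ) (X : ℝ → E)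
    (a b : ℝ) : Prop :=
  ∀ x y, a ≤ x → x ≤ y → y ≤ b → ‖X y - X x‖ ≤ c * ω x y ^ (1 / q)

namespace ControlledOn

variable {E : Type*} [SeminormedAddCommGroup E] {ω : ℝ → ℝ → ℝ} {q c c' : ℝ} {X Y : ℝ → E}
  {a b a' b' m : ℝ}

theorem mono_const (h : ControlledOn ω q c X a b) (hω : IsSuperadditiveOn ω a b) (hc : c ≤ c') :
    ControlledOn ω q c' X a b := fun x y hx hxy hy =>
  (h x y hx hxy hy).trans
    (mul_le_mul_of_nonneg_right hc (Real.rpow_nonneg (hω.nonneg x y hx hxy hy) _))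

theorem subinterval (h : ControlledOn ω q c X a b) (ha : a ≤ a') (hb : b' ≤ b) :
    ControlledOn ω q c X a' b' := fun x y hx hxy hy => h x y (ha.trans hx) hxy (hy.trans hb)

theorem sub (hX : ControlledOn ω q c X a b) (hY : ControlledOn ω q c' Y a b) :
    ControlledOn ω q (c + c') (X - Y) a b := fun x y hx hxy hy => by
  rw [Pi.sub_apply, Pi.sub_apply, sub_sub_sub_comm, add_mul]
  exact (norm_sub_le _ _).trans (add_le_add (hX x y hx hxy hy) (hY x y hx hxy hy))

theorem norm_le (h : ControlledOn ω q c X a b) {x y : ℝ} (hx : a ≤ x) (hxy : x ≤ y) (hy : y ≤ b) :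
    ‖X y‖ ≤ ‖X x‖ + c * ω x y ^ (1 / q) := by
  have := norm_le_insert' (X y) (X x)
  linarith [h x y hx hxy hy]

theorem of_le_left (hba : b ≤ a) : ControlledOn ω q 0 X a b := fun x y hx hxy hy => by
  rw [le_antisymm hxy (by linarith), sub_self, norm_zero, zero_mul]

theorem append (h₁ : ControlledOn ω q c X a m) (h₂ : ControlledOn ω q c' X m b)
    (hω : IsSuperadditiveOn ω a b) (hq : 0 ≤ q) (hc : 0 ≤ c) (hc' : 0 ≤ c') :
    ControlledOn ω q (c + c') X a b := by
  intro x y hx hxy hy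
  have hw : 0 ≤ ω x y ^ (1 / q) := Real.rpow_nonneg (hω.nonneg x y hx hxy hy) _
  rcases le_total y m with hym | hmy
  · nlinarith [h₁ x y hx hxy hym]
  rcases le_total m x with hmx | hxm
  · nlinarith [h₂ x y hmx hxy hy]
  have hp : 0 ≤ 1 / q := by positivity
  calc ‖X y - X x‖ ≤ ‖X y - X m‖ + ‖X m - X x‖ := norm_sub_le_norm_sub_add_norm_sub _ _ _
    _ ≤ c' * ω m y ^ (1 / q) + c * ω x m ^ (1 / q) :=
      add_le_add (h₂ m y le_rfl hmy hy) (h₁ x m hx hxm le_rfl)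
    _ ≤ c' * ω x y ^ (1 / q) + c * ω x y ^ (1 / q) :=
      add_le_add (mul_le_mul_of_nonneg_left (hω.rpow_mono hx hxm hmy le_rfl hy hp) hc')
        (mul_le_mul_of_nonneg_left (hω.rpow_mono hx le_rfl hxm hmy hy hp) hc)
    _ = (c + c') * ω x y ^ (1 / q) := by ring

theorem of_subdivision (P : Subdivision a b) (hω : IsSuperadditiveOn ω a b) (hq : 0 ≤ q)
    (hc : 0 ≤ c) (h : ∀ j < P.N, ControlledOn ω q c X (P.pt j) (P.pt (j + 1))) :
    ControlledOn ω q (P.N * c) X a b := by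
  suffices H : ∀ j ≤ P.N, ControlledOn ω q (j * c) X a (P.pt j) by
    simpa [P.last] using H P.N le_rfl
  intro j hj
  induction j with
  | zero => simpa using of_le_left P.first.le
  | succ j ih =>
    rw [Nat.cast_succ, add_one_mul]
    exact (ih (by omega)).append (h j (by omega)) (hω.subinterval le_rfl (P.pt_le_right hj)) hq
      (by positivity) hc

theorem of_contraction {A β : ℝ} (hω : IsSuperadditiveOn ω a b) (hA : 0 ≤ A)
    (hβ : 0 ≤ β) (hXA : ControlledOn ω q A X a b)
    (himp : ∀ c, 0 ≤ c → ControlledOn ω q c X a b → ControlledOn ω q (β + c / 2) X a b) :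
    ControlledOn ω q (2 * β) X a b := by
  have key : ∀ n : ℕ, ControlledOn ω q (2 * β + A * (1 / 2) ^ n) X a b := by
    intro n
    induction n with
    | zero => exact hXA.mono_const hω (by linarith)
    | succ n ih =>
      refine (himp _ (by positivity) ih).mono_const hω (le_of_eq ?_)
      rw [pow_succ]
      ring
  intro x y hx hxy hy
  have hlim : Tendsto (fun n : ℕ => (2 * β + A * (1 / 2) ^ n) * ω x y ^ (1 / q)) atTop
      (𝓝 (2 * β * ω x y ^ (1 / q))) := by
    simpa using (((tendsto_pow_atTop_nhds_zero_of_lt_one (by norm_num : (0 : ℝ) ≤ 1 / 2)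
      (by norm_num)).const_mul A).const_add (2 * β)).mul_const (ω x y ^ (1 / q))
  exact ge_of_tendsto' hlim fun n => key n x y hx hxy hy

/-- The values at the cut points at most double from one piece to the next. -/
theorem of_subdivision_of_improve {A β : ℝ} (P : Subdivision a b)
    (hω : IsSuperadditiveOn ω a b) (hq : 0 ≤ q)
    (hsmall : ∀ j < P.N, ω (P.pt j) (P.pt (j + 1)) ^ (1 / q) ≤ 1 / 2) (hA : 0 ≤ A) (hβ : 0 ≤ β)
    (hXA : ControlledOn ω q A X a b)
    (himp : ∀ j < P.N, ∀ c, 0 ≤ c → ControlledOn ω q c X (P.pt j) (P.pt (j + 1)) →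
      ControlledOn ω q (‖X (P.pt j)‖ + β + c / 2) X (P.pt j) (P.pt (j + 1))) :
    ControlledOn ω q (P.N * (2 ^ P.N * (‖X a‖ + β))) X a b := by
  have hωj : ∀ j < P.N, IsSuperadditiveOn ω (P.pt j) (P.pt (j + 1)) := fun j hj =>
    hω.subinterval (P.left_le_pt (by omega)) (P.pt_le_right hj)
  have hpiece : ∀ j < P.N, ControlledOn ω q (2 * (‖X (P.pt j)‖ + β)) X (P.pt j) (P.pt (j + 1)) :=
    fun j hj => of_contraction (hωj j hj) hA (by positivity)
      (hXA.subinterval (P.left_le_pt (by omega)) (P.pt_le_right hj)) (himp j hj)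
  have hgrowth : ∀ j ≤ P.N, ‖X (P.pt j)‖ + β ≤ 2 ^ j * (‖X a‖ + β) := by
    intro j hj
    induction j with
    | zero => simp [P.first]
    | succ j ih =>
      have hstep := (hpiece j hj).norm_le le_rfl (P.mono j hj) le_rfl
      have := mul_le_mul_of_nonneg_left (hsmall j hj)
        (by positivity : 0 ≤ 2 * (‖X (P.pt j)‖ + β))
      rw [pow_succ]
      nlinarith [ih (by omega)]
  refine of_subdivision P hω hq (by positivity) fun j hj => (hpiece j hj).mono_const (hωj j hj) ?_
  calc 2 * (‖X (P.pt j)‖ + β) ≤ 2 * (2 ^ j * (‖X a‖ + β)) := by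
        gcongr
        exact hgrowth j hj.le
    _ = 2 ^ (j + 1) * (‖X a‖ + β) := by ring
    _ ≤ 2 ^ P.N * (‖X a‖ + β) := by
        gcongr
        · norm_num
        · omega

end ControlledOn

theorem sqrt_mul_rpow_two_div {u v : ℝ} (hu : 0 ≤ u) (hv : 0 ≤ v) (q : ℝ) :
    √(u * v) ^ (2 / q) = u ^ (1 / q) * v ^ (1 / q) := by
  rw [Real.sqrt_eq_rpow, ← Real.rpow_mul (mul_nonneg hu hv), Real.mul_rpow hu hv]
  ring_nf

section Young

variable {E F G : Type*} [NormedAddCommGroup E] [NormedSpace ℝ E] [NormedAddCommGroup F]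
  [NormedSpace ℝ F] [NormedAddCommGroup G] [NormedSpace ℝ G] {s t : ℝ}

def rsSum (Ω : ℝ → F →L[ℝ] G) (Y : ℝ → E →L[ℝ] F) (P : Subdivision s t) : E →L[ℝ] G :=
  P.sum fun x y => (Ω y - Ω x).comp (Y x)

theorem rsSum_zero_left (Y : ℝ → E →L[ℝ] F) (P : Subdivision s t) :
    rsSum (0 : ℝ → F →L[ℝ] G) Y P = 0 := by
  simp [rsSum, Subdivision.sum]

theorem rsSum_sub_left (Ω Ω' : ℝ → F →L[ℝ] G) (Y : ℝ → E →L[ℝ] F) (P : Subdivision s t) :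
    rsSum (Ω - Ω') Y P = rsSum Ω Y P - rsSum Ω' Y P := by
  simp only [rsSum, Subdivision.sum, ← Finset.sum_sub_distrib, Pi.sub_apply]
  refine Finset.sum_congr rfl fun _ _ => ?_
  rw [sub_sub_sub_comm, ContinuousLinearMap.sub_comp]

theorem rsSum_sub_right (Ω : ℝ → F →L[ℝ] G) (Y Y' : ℝ → E →L[ℝ] F) (P : Subdivision s t) :
    rsSum Ω (Y - Y') P = rsSum Ω Y P - rsSum Ω Y' P := by
  simp only [rsSum, Subdivision.sum, ← Finset.sum_sub_distrib, Pi.sub_apply,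
    ContinuousLinearMap.comp_sub]

/-- The Young–Loève estimate. -/
theorem norm_rsSum_sub_le {ω₁ ω₂ : ℝ → ℝ → ℝ} {q a b : ℝ} (hq : 0 < q) (hq2 : q < 2)
    (h₁ : IsSuperadditiveOn ω₁ s t) (h₂ : IsSuperadditiveOn ω₂ s t) {Ω : ℝ → F →L[ℝ] G}
    {Y : ℝ → E →L[ℝ] F} (hΩ : ControlledOn ω₁ q a Ω s t) (hY : ControlledOn ω₂ q b Y s t)
    (ha : 0 ≤ a) (hb : 0 ≤ b) (P : Subdivision s t) :
    ‖rsSum Ω Y P - (Ω t - Ω s).comp (Y s)‖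
      ≤ a * b * sewingConst (2 / q) * (ω₁ s t ^ (1 / q) * ω₂ s t ^ (1 / q)) := by
  have hp : 0 ≤ 1 / q := by positivity
  have hst := P.left_le_right
  rw [← sqrt_mul_rpow_two_div (h₁.nonneg s t le_rfl hst le_rfl)
    (h₂.nonneg s t le_rfl hst le_rfl)]
  refine P.norm_sum_sub_le (h₁.sqrt_mul h₂) (by rw [lt_div_iff₀ hq]; linarith)
    (mul_nonneg ha hb) _ fun x y z hx hxy hyz hz => ?_
  have hy : y ≤ t := hyz.trans hz
  have hsy : s ≤ y := hx.trans hxy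
  have hδ : (Ω z - Ω x).comp (Y x) - (Ω y - Ω x).comp (Y x) - (Ω z - Ω y).comp (Y y)
      = -(Ω z - Ω y).comp (Y y - Y x) := by
    simp only [ContinuousLinearMap.sub_comp, ContinuousLinearMap.comp_sub]
    abel
  rw [hδ, norm_neg, sqrt_mul_rpow_two_div (h₁.nonneg x z hx (hxy.trans hyz) hz)
    (h₂.nonneg x z hx (hxy.trans hyz) hz)]
  calc ‖(Ω z - Ω y).comp (Y y - Y x)‖ ≤ ‖Ω z - Ω y‖ * ‖Y y - Y x‖ :=
        ContinuousLinearMap.opNorm_comp_le _ _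
    _ ≤ (a * ω₁ y z ^ (1 / q)) * (b * ω₂ x y ^ (1 / q)) :=
        mul_le_mul (hΩ y z hsy hyz hz) (hY x y hx hxy hy) (norm_nonneg _)
          (mul_nonneg ha (Real.rpow_nonneg (h₁.nonneg y z hsy hyz hz) _))
    _ ≤ (a * ω₁ x z ^ (1 / q)) * (b * ω₂ x z ^ (1 / q)) :=
        mul_le_mul (mul_le_mul_of_nonneg_left (h₁.rpow_mono hx hxy hyz le_rfl hz hp) ha)
          (mul_le_mul_of_nonneg_left (h₂.rpow_mono hx le_rfl hxy hyz hz hp) hb)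
          (mul_nonneg hb (Real.rpow_nonneg (h₂.nonneg x y hx hxy hy) _))
          (mul_nonneg ha (Real.rpow_nonneg (h₁.nonneg x z hx (hxy.trans hyz) hz) _))
    _ = a * b * (ω₁ x z ^ (1 / q) * ω₂ x z ^ (1 / q)) := by ring

end Young

section QVar

variable {E : Type u} [NormedAddCommGroup E] {q B : ℝ} {X : ℝ → E} {s t u : ℝ}

/-- The `q`-th power of the `q`-variation of `X` over `[s,t]`. -/
noncomputable def qVar (q : ℝ) (X : ℝ → E) (s t : ℝ) : ℝ :=
  ⨆ P : Subdivision s t, P.sum fun x y => ‖X y - X x‖ ^ q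

theorem sum_rpow_norm_nonneg (P : Subdivision s t) :
    0 ≤ P.sum fun x y => ‖X y - X x‖ ^ q :=
  Finset.sum_nonneg fun _ _ => Real.rpow_nonneg (norm_nonneg _) q

variable (hB : ∀ P : Subdivision 0 1, (P.sum fun x y => ‖X y - X x‖ ^ q) ≤ B)
include hB

theorem sum_rpow_norm_le (hs : 0 ≤ s) (ht : t ≤ 1) (P : Subdivision s t) :
    (P.sum fun x y => ‖X y - X x‖ ^ q) ≤ B := by
  have := hB (((Subdivision.single hs).append P).append (Subdivision.single ht))
  simp only [Subdivision.sum_append, Subdivision.sum_single] at this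
  have := Real.rpow_nonneg (norm_nonneg (X s - X 0)) q
  have := Real.rpow_nonneg (norm_nonneg (X 1 - X t)) q
  linarith

theorem le_qVar (hs : 0 ≤ s) (ht : t ≤ 1) (P : Subdivision s t) :
    (P.sum fun x y => ‖X y - X x‖ ^ q) ≤ qVar q X s t :=
  le_ciSup ⟨B, Set.forall_mem_range.mpr (sum_rpow_norm_le hB hs ht)⟩ P

theorem qVar_le (hs : 0 ≤ s) (hst : s ≤ t) (ht : t ≤ 1) : qVar q X s t ≤ B :=
  haveI : Nonempty (Subdivision s t) := ⟨.single hst⟩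
  ciSup_le (sum_rpow_norm_le hB hs ht)

theorem isSuperadditiveOn_qVar : IsSuperadditiveOn (qVar q X) 0 1 where
  nonneg _ _ _ _ _ := Real.iSup_nonneg fun _ => sum_rpow_norm_nonneg _
  add_le x y z hx hxy hyz hz := by
    have : Nonempty (Subdivision x y) := ⟨.single hxy⟩
    have : Nonempty (Subdivision y z) := ⟨.single hyz⟩
    rw [← le_sub_iff_add_le]
    refine ciSup_le fun P => ?_
    rw [le_sub_iff_add_le, ← le_sub_iff_add_le']
    refine ciSup_le fun Q => ?_
    rw [le_sub_iff_add_le', ← Subdivision.sum_append]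
    exact le_qVar hB hx hz _

theorem controlledOn_qVar (hq : 0 < q) : ControlledOn (qVar q X) q 1 X 0 1 := by
  intro x y hx hxy hy
  have h := le_qVar hB hx hy (.single hxy)
  rw [Subdivision.sum_single] at h
  rw [one_mul, one_div, ← Real.rpow_rpow_inv (norm_nonneg (X y - X x)) hq.ne']
  exact Real.rpow_le_rpow (Real.rpow_nonneg (norm_nonneg _) q) h (by positivity)

end QVar

theorem IsControl.isSuperadditiveOn {ω : ℝ → ℝ → ℝ} (h : IsControl ω) :
    IsSuperadditiveOn ω 0 1 :=
  ⟨h.2.2.1, h.2.2.2⟩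

/-- The cut points solve `ω(0,u) + u = j (ω(0,1) + 1) / n`; the summand `u` makes the left side
strictly increasing. -/
theorem IsControl.exists_subdivision {ω : ℝ → ℝ → ℝ} (h : IsControl ω) {n : ℕ} (hn : 0 < n) :
    ∃ P : Subdivision 0 1, P.N = n ∧ ∀ j < n, ω (P.pt j) (P.pt (j + 1)) ≤ (ω 0 1 + 1) / n := by
  obtain ⟨hc, hdiag, hnn, hsa⟩ := h
  set g : ℝ → ℝ := fun x => ω 0 x + x
  have hg : StrictMonoOn g (Set.Icc 0 1) := fun x hx y hy hxy => by
    have := hsa 0 x y le_rfl hx.1 hxy.le hy.2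
    have := hnn x y hx.1 hxy.le hy.2
    simp only [g]
    linarith
  have hgc : ContinuousOn g (Set.Icc 0 1) :=
    (hc.comp (by fun_prop : Continuous fun x : ℝ => ((0 : ℝ), x)).continuousOn
      fun x hx => ⟨le_rfl, hx.1, hx.2⟩).add continuousOn_id
  have hn' : (0 : ℝ) < n := by exact_mod_cast hn
  have hc0 : 0 ≤ ω 0 1 := hnn 0 1 le_rfl zero_le_one le_rfl
  have hval : ∀ j : ℕ, ∃ x ∈ Set.Icc (0 : ℝ) 1, g x = min j n * (ω 0 1 + 1) / n := by
    intro j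
    refine intermediate_value_Icc zero_le_one hgc ⟨?_, ?_⟩
    · simp only [g, hdiag 0 le_rfl zero_le_one, add_zero]
      positivity
    · rw [div_le_iff₀ hn']
      simp only [g]
      have : ((min j n : ℕ) : ℝ) ≤ n := by exact_mod_cast min_le_right j n
      nlinarith
  choose u hu hgu using hval
  have hg_succ : ∀ j < n, g (u (j + 1)) - g (u j) = (ω 0 1 + 1) / n := fun j hj => by
    rw [hgu, hgu, min_eq_left (by omega), min_eq_left (by omega)]
    push_cast
    ring
  have hmono : ∀ j < n, u j < u (j + 1) := fun j hj =>
    (hg.lt_iff_lt (hu j) (hu (j + 1))).mp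
      (by linarith [hg_succ j hj, div_pos (by linarith : (0 : ℝ) < ω 0 1 + 1) hn'])
  have hu0 : u 0 = 0 := hg.injOn (hu 0) ⟨le_rfl, zero_le_one⟩ (by
    rw [hgu]
    simp [g, hdiag 0 le_rfl zero_le_one])
  have hun : u n = 1 := hg.injOn (hu n) ⟨zero_le_one, le_rfl⟩ (by
    rw [hgu, min_self]
    simp only [g]
    field_simp)
  refine ⟨⟨n, u, hn, hu0, hun, fun j hj => (hmono j hj).le⟩, rfl, fun j hj => ?_⟩
  have := hsa 0 (u j) (u (j + 1)) le_rfl (hu j).1 (hmono j hj).le (hu (j + 1)).2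
  have := hg_succ j hj
  have := hmono j hj
  simp only [g] at *
  linarith

theorem mul_rpow_one_div_le_one {L x q : ℝ} (hL : 0 ≤ L) (hx : 0 ≤ x) (hq : 0 < q)
    (h : L ^ q * x ≤ 1) : L * x ^ (1 / q) ≤ 1 := by
  rw [← Real.rpow_rpow_inv hL hq.ne', ← one_div, ← Real.mul_rpow (by positivity) hx]
  exact Real.rpow_le_one (by positivity) h (by positivity)

theorem IsControl.exists_subdivision_rpow_le {ω : ℝ → ℝ → ℝ} (h : IsControl ω) {q L : ℝ}
    (hq : 0 < q) (hL : 0 < L) :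
    ∃ P : Subdivision 0 1, P.N = ⌈(ω 0 1 + 1) * (2 * L) ^ q⌉₊ + 1 ∧
      ∀ j < P.N, L * ω (P.pt j) (P.pt (j + 1)) ^ (1 / q) ≤ 1 / 2 := by
  set n := ⌈(ω 0 1 + 1) * (2 * L) ^ q⌉₊ + 1
  obtain ⟨P, hPN, hP⟩ := h.exists_subdivision (show 0 < n from Nat.succ_pos _)
  refine ⟨P, hPN, fun j hj => ?_⟩
  have hωj := h.isSuperadditiveOn.nonneg _ _ (P.left_le_pt (by omega)) (P.mono j hj)
    (P.pt_le_right hj)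
  have hn : (ω 0 1 + 1) * (2 * L) ^ q ≤ n := (Nat.le_ceil _).trans (by simp [n])
  suffices (2 * L) ^ q * ω (P.pt j) (P.pt (j + 1)) ≤ 1 by
    linarith [mul_rpow_one_div_le_one (by positivity) hωj hq this]
  calc (2 * L) ^ q * ω (P.pt j) (P.pt (j + 1)) ≤ (2 * L) ^ q * ((ω 0 1 + 1) / n) :=
        mul_le_mul_of_nonneg_left (hP j (hPN ▸ hj)) (by positivity)
    _ ≤ 1 := by
        rw [mul_div_assoc', div_le_one (by positivity)]
        linarith

theorem rpow_le_half_of_mul_le {ω : ℝ → ℝ → ℝ} {q Y : ℝ} (hY : 0 ≤ Y) {P : Subdivision 0 1}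
    (hω : IsSuperadditiveOn ω 0 1)
    (hP : ∀ j < P.N, (1 + Y) * ω (P.pt j) (P.pt (j + 1)) ^ (1 / q) ≤ 1 / 2) :
    ∀ j < P.N, ω (P.pt j) (P.pt (j + 1)) ^ (1 / q) ≤ 1 / 2 := fun j hj =>
  (le_mul_of_one_le_left (Real.rpow_nonneg (hω.nonneg _ _ (P.left_le_pt (by omega))
    (P.mono j hj) (P.pt_le_right hj)) _) (by linarith)).trans (hP j hj)

section LinearODE

variable {V : Type u} [NormedAddCommGroup V] [NormedSpace ℝ V] {ω : ℝ → ℝ → ℝ} {q : ℝ}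

theorem RSLimit.tendsto {Ω Y : ℝ → V →L[ℝ] V} {s t : ℝ} {L : V →L[ℝ] V}
    (h : RSLimit Ω Y s t L) : Tendsto (rsSum Ω Y) (Subdivision.fine s t) (𝓝 L) := by
  rw [Metric.tendsto_nhds]
  intro ε hε
  obtain ⟨δ, hδ, hP⟩ := h (ε / 2) (half_pos hε)
  filter_upwards [tendsto_comap.eventually (gt_mem_nhds hδ)] with P hP'
  rw [dist_eq_norm]
  exact (hP P hP').trans_lt (half_lt_self hε)

/-- The a priori bound comes from the Young–Loève estimate with the `q`-variation of `M` as the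
second control. -/
theorem SolvesLinearODE.exists_controlledOn (hq : 0 < q) (hq2 : q < 2)
    (hω : IsSuperadditiveOn ω 0 1) {Ω M : ℝ → V →L[ℝ] V} (hΩ : ControlledOn ω q 1 Ω 0 1)
    (hMc : ContinuousOn M (Set.Icc 0 1)) (hMq : FiniteQVar q M) (hM : SolvesLinearODE Ω M) :
    ∃ A, 0 ≤ A ∧ ControlledOn ω q A M 0 1 := by
  obtain ⟨B, hB⟩ := hMq
  obtain ⟨K, hK⟩ := isCompact_Icc.exists_bound_of_continuousOn hMc
  have hK0 : 0 ≤ K := (norm_nonneg _).trans (hK 0 ⟨le_rfl, zero_le_one⟩)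
  have hB0 : 0 ≤ B := sum_rpow_norm_nonneg (.single zero_le_one) |>.trans (hB _)
  have hY := sewingConst_nonneg (2 / q)
  refine ⟨K + sewingConst (2 / q) * B ^ (1 / q), by positivity, fun x y hx hxy hy => ?_⟩
  have hv := isSuperadditiveOn_qVar hB
  have hR : ‖(M y - M x) - (Ω y - Ω x).comp (M x)‖
      ≤ 1 * 1 * sewingConst (2 / q) * (ω x y ^ (1 / q) * qVar q M x y ^ (1 / q)) :=
    Subdivision.norm_sub_le_of_tendsto hxy (hM x y hx hxy hy).tendsto fun P =>
      norm_rsSum_sub_le hq hq2 (hω.subinterval hx hy) (hv.subinterval hx hy)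
        (hΩ.subinterval hx hy) ((controlledOn_qVar hB hq).subinterval hx hy) zero_le_one
        zero_le_one P
  have hvB : qVar q M x y ^ (1 / q) ≤ B ^ (1 / q) :=
    Real.rpow_le_rpow (hv.nonneg x y hx hxy hy) (qVar_le hB hx hxy hy) (by positivity)
  have hw : 0 ≤ ω x y ^ (1 / q) := Real.rpow_nonneg (hω.nonneg x y hx hxy hy) _
  have hmain : ‖(Ω y - Ω x).comp (M x)‖ ≤ ω x y ^ (1 / q) * K :=
    (ContinuousLinearMap.opNorm_comp_le _ _).trans (mul_le_mul
      (by simpa only [one_mul] using hΩ x y hx hxy hy) (hK x ⟨hx, hxy.trans hy⟩) (norm_nonneg _) hw)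
  calc ‖M y - M x‖
      ≤ ‖(Ω y - Ω x).comp (M x)‖ + ‖(M y - M x) - (Ω y - Ω x).comp (M x)‖ :=
        norm_le_insert' _ _
    _ ≤ ω x y ^ (1 / q) * K + 1 * 1 * sewingConst (2 / q) * (ω x y ^ (1 / q) * B ^ (1 / q)) :=
        add_le_add hmain (hR.trans (by gcongr))
    _ = (K + sewingConst (2 / q) * B ^ (1 / q)) * ω x y ^ (1 / q) := by ring

/-- The Young–Loève remainder for `dD = dΩ · D + dΘ · N`. -/
theorem norm_increment_sub_germ_le (hq : 0 < q) (hq2 : q < 2) {x y : ℝ} (hxy : x ≤ y)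
    (hω : IsSuperadditiveOn ω x y) {Ω Θ D N : ℝ → V →L[ℝ] V} {c ε G : ℝ}
    (hΩ : ControlledOn ω q 1 Ω x y) (hD : ControlledOn ω q c D x y)
    (hΘ : ControlledOn ω q ε Θ x y) (hN : ControlledOn ω q G N x y) (hc : 0 ≤ c) (hε : 0 ≤ ε)
    (hG : 0 ≤ G) (hlim : Tendsto (fun P => rsSum Ω D P + rsSum Θ N P) (Subdivision.fine x y)
      (𝓝 (D y - D x))) :
    ‖(D y - D x) - ((Ω y - Ω x).comp (D x) + (Θ y - Θ x).comp (N x))‖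
      ≤ (c + ε * G) * sewingConst (2 / q) * (ω x y ^ (1 / q) * ω x y ^ (1 / q)) := by
  refine Subdivision.norm_sub_le_of_tendsto hxy hlim fun P => ?_
  have h₁ := norm_rsSum_sub_le hq hq2 hω hω hΩ hD zero_le_one hc P
  have h₂ := norm_rsSum_sub_le hq hq2 hω hω hΘ hN hε hG P
  rw [add_sub_add_comm]
  refine (norm_add_le _ _).trans ?_
  linarith

theorem ControlledOn.improve (hq : 0 < q) (hq2 : q < 2) {s t a b : ℝ}
    (hω : IsSuperadditiveOn ω s t) (hsa : s ≤ a) (hbt : b ≤ t)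
    (hsmall : (1 + sewingConst (2 / q)) * ω a b ^ (1 / q) ≤ 1 / 2)
    {Ω Θ D N : ℝ → V →L[ℝ] V} {c ε G K : ℝ} (hΩ : ControlledOn ω q 1 Ω s t)
    (hΘ : ControlledOn ω q ε Θ s t) (hN : ControlledOn ω q G N s t)
    (hNK : ∀ x, s ≤ x → x ≤ t → ‖N x‖ ≤ K) (hε : 0 ≤ ε) (hG : 0 ≤ G)
    (hlim : ∀ x y, s ≤ x → x ≤ y → y ≤ t → Tendsto (fun P => rsSum Ω D P + rsSum Θ N P)
      (Subdivision.fine x y) (𝓝 (D y - D x)))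
    (hc : 0 ≤ c) (hD : ControlledOn ω q c D a b) :
    ControlledOn ω q (‖D a‖ + ε * (K + G * sewingConst (2 / q)) + c / 2) D a b := by
  intro x y hx hxy hy
  have hsx := hsa.trans hx
  have hyt := hy.trans hbt
  set Y := sewingConst (2 / q)
  set w := ω x y ^ (1 / q)
  set ρ := ω a b ^ (1 / q)
  have hp : 0 ≤ 1 / q := by positivity
  have hY : 0 ≤ Y := sewingConst_nonneg _
  have hw : 0 ≤ w := Real.rpow_nonneg (hω.nonneg x y hsx hxy hyt) _
  have hwρ : w ≤ ρ := hω.rpow_mono hsa hx hxy hy hbt hp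
  have hρ1 : ρ ≤ 1 := by nlinarith
  have hGY : G * Y * ρ ≤ G * Y := mul_le_of_le_one_right (by positivity) hρ1
  have hR := norm_increment_sub_germ_le hq hq2 hxy (hω.subinterval hsx hyt)
    (hΩ.subinterval hsx hyt) (hD.subinterval hx hy) (hΘ.subinterval hsx hyt)
    (hN.subinterval hsx hyt) hc hε hG (hlim x y hsx hxy hyt)
  have hDx : ‖D x‖ ≤ ‖D a‖ + c * ρ :=
    (hD.norm_le le_rfl hx (hxy.trans hy)).trans (by
      gcongr
      exact hω.rpow_mono hsa le_rfl hx (hxy.trans hy) hbt hp)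
  have h₁ : ‖(Ω y - Ω x).comp (D x)‖ ≤ w * (‖D a‖ + c * ρ) :=
    (ContinuousLinearMap.opNorm_comp_le _ _).trans
      (mul_le_mul (by simpa only [one_mul] using hΩ x y hsx hxy hyt) hDx (norm_nonneg _) hw)
  have h₂ : ‖(Θ y - Θ x).comp (N x)‖ ≤ ε * w * K :=
    (ContinuousLinearMap.opNorm_comp_le _ _).trans (mul_le_mul (hΘ x y hsx hxy hyt)
      (hNK x hsx (hxy.trans hyt)) (norm_nonneg _) (by positivity))
  calc ‖D y - D x‖
      ≤ ‖(Ω y - Ω x).comp (D x)‖ + ‖(Θ y - Θ x).comp (N x)‖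
        + ‖(D y - D x) - ((Ω y - Ω x).comp (D x) + (Θ y - Θ x).comp (N x))‖ :=
        (norm_le_insert' _ _).trans (add_le_add (norm_add_le _ _) le_rfl)
    _ ≤ w * (‖D a‖ + c * ρ) + ε * w * K + (c + ε * G) * Y * (w * ρ) := by
        gcongr
        exact hR.trans (mul_le_mul_of_nonneg_left (mul_le_mul_of_nonneg_left hwρ hw)
          (by positivity))
    _ = w * (‖D a‖ + ε * (K + G * Y * ρ) + c * ((1 + Y) * ρ)) := by ring
    _ ≤ w * (‖D a‖ + ε * (K + G * Y) + c * (1 / 2)) := by gcongr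
    _ = (‖D a‖ + ε * (K + G * Y) + c / 2) * w := by ring

variable (P : Subdivision 0 1)
  (hP : ∀ j < P.N, (1 + sewingConst (2 / q)) * ω (P.pt j) (P.pt (j + 1)) ^ (1 / q) ≤ 1 / 2)
include hP

theorem SolvesLinearODE.controlledOn_of_subdivision (hq : 0 < q) (hq2 : q < 2)
    (hω : IsSuperadditiveOn ω 0 1) {Ω M : ℝ → V →L[ℝ] V} (hΩ : ControlledOn ω q 1 Ω 0 1)
    (hMc : ContinuousOn M (Set.Icc 0 1)) (hMq : FiniteQVar q M) (hM0 : ‖M 0‖ ≤ 1)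
    (hM : SolvesLinearODE Ω M) : ControlledOn ω q (P.N * 2 ^ P.N) M 0 1 := by
  obtain ⟨A, hA, hMA⟩ := hM.exists_controlledOn hq hq2 hω hΩ hMc hMq
  have hzero : ControlledOn ω q 0 (0 : ℝ → V →L[ℝ] V) 0 1 := fun _ _ _ _ _ => by simp
  -- `M` solves the inhomogeneous equation with `Θ = N = 0`.
  have hlim : ∀ x y, 0 ≤ x → x ≤ y → y ≤ 1 →
      Tendsto (fun P => rsSum Ω M P + rsSum (0 : ℝ → V →L[ℝ] V) 0 P) (Subdivision.fine x y)
        (𝓝 (M y - M x)) := fun x y hx hxy hy => by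
    simpa [rsSum_zero_left] using (hM x y hx hxy hy).tendsto
  have h := ControlledOn.of_subdivision_of_improve P hω hq.le
    (rpow_le_half_of_mul_le (sewingConst_nonneg _) hω hP) hA
    (β := 0 * (0 + 0 * sewingConst (2 / q))) (by simp) hMA fun j hj c hc hMc' =>
      ControlledOn.improve hq hq2 hω (P.left_le_pt (by omega)) (P.pt_le_right hj) (hP j hj) hΩ
        hzero hzero (K := 0) (fun _ _ _ => by simp) le_rfl le_rfl hlim hc hMc'
  refine h.mono_const hω ?_
  rw [zero_mul, add_zero, ← mul_assoc]
  exact mul_le_of_le_one_right (by positivity) hM0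

theorem controlledOn_sub_of_subdivision (hq : 0 < q) (hq2 : q < 2)
    (hω : IsSuperadditiveOn ω 0 1) {Ω Ωh M Mh : ℝ → V →L[ℝ] V} {ε G : ℝ} (hε : 0 ≤ ε)
    (hG : 0 ≤ G) (hΩ : ControlledOn ω q 1 Ω 0 1) (hΩΩh : ControlledOn ω q ε (Ω - Ωh) 0 1)
    (hMG : ControlledOn ω q G M 0 1) (hMhG : ControlledOn ω q G Mh 0 1) (h0 : M 0 = Mh 0)
    (hMh0 : ‖Mh 0‖ ≤ 1) (hM : SolvesLinearODE Ω M) (hMh : SolvesLinearODE Ωh Mh) :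
    ControlledOn ω q (P.N * 2 ^ P.N * (1 + G * ω 0 1 ^ (1 / q) + G * sewingConst (2 / q)) * ε)
      (M - Mh) 0 1 := by
  have hK : ∀ x, 0 ≤ x → x ≤ 1 → ‖Mh x‖ ≤ 1 + G * ω 0 1 ^ (1 / q) := fun x hx hx1 =>
    (hMhG.norm_le le_rfl hx hx1).trans (add_le_add hMh0 (mul_le_mul_of_nonneg_left
      (hω.rpow_mono le_rfl le_rfl hx hx1 le_rfl (by positivity)) hG))
  have hlim : ∀ x y, 0 ≤ x → x ≤ y → y ≤ 1 →
      Tendsto (fun P => rsSum Ω (M - Mh) P + rsSum (Ω - Ωh) Mh P) (Subdivision.fine x y)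
        (𝓝 ((M - Mh) y - (M - Mh) x)) := fun x y hx hxy hy => by
    convert (hM x y hx hxy hy).tendsto.sub (hMh x y hx hxy hy).tendsto using 1
    · funext P
      rw [rsSum_sub_right, rsSum_sub_left]
      abel
    · rw [Pi.sub_apply, Pi.sub_apply, sub_sub_sub_comm]
  have hβ : 0 ≤ ε * (1 + G * ω 0 1 ^ (1 / q) + G * sewingConst (2 / q)) := by
    have := sewingConst_nonneg (2 / q)
    have := hω.nonneg 0 1 le_rfl zero_le_one le_rfl
    positivity
  have h := ControlledOn.of_subdivision_of_improve P hω hq.le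
    (rpow_le_half_of_mul_le (sewingConst_nonneg _) hω hP) (add_nonneg hG hG) hβ
    (hMG.sub hMhG) fun j hj c hc hD =>
      ControlledOn.improve hq hq2 hω (P.left_le_pt (by omega)) (P.pt_le_right hj) (hP j hj) hΩ
        hΩΩh hMhG hK hε hG hlim hc hD
  rw [Pi.sub_apply, h0, sub_self, norm_zero, zero_add] at h
  exact h.mono_const hω (le_of_eq (by ring))

end LinearODE

/-- If `Ω, Ω̂` are `ε`-close in the controlled sense, the solutions `M, M̂` of
`dM = dΩ · M`, `dM̂ = dΩ̂ · M̂` with `M(0) = M̂(0) = Id` satisfy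
`‖(M(t) − M(s)) − (M̂(t) − M̂(s))‖ ≤ C ε ω(s,t)^{1/q}` where `C > 0` depends only on `q` and
`ω(0,1)`. -/
theorem statement7 (q : ℝ) (hq1 : 1 ≤ q) (hq2 : q < 2) (c₀ : ℝ) :
    ∃ C : ℝ, 0 < C ∧
      ∀ (V : Type u) [NormedAddCommGroup V] [NormedSpace ℝ V] [CompleteSpace V],
        ∀ (ε : ℝ), 0 ≤ ε →
        ∀ (Ω Ωh : ℝ → V →L[ℝ] V) (ω : ℝ → ℝ → ℝ),
          MemC0q q Ω → MemC0q q Ωh → IsControl ω → ω 0 1 = c₀ →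
          (∀ s t, 0 ≤ s → s ≤ t → t ≤ 1 → ‖Ω t - Ω s‖ ≤ ω s t ^ (1 / q)) →
          (∀ s t, 0 ≤ s → s ≤ t → t ≤ 1 → ‖Ωh t - Ωh s‖ ≤ ω s t ^ (1 / q)) →
          (∀ s t, 0 ≤ s → s ≤ t → t ≤ 1 →
            ‖(Ω t - Ω s) - (Ωh t - Ωh s)‖ ≤ ε * ω s t ^ (1 / q)) →
          ∀ M Mh : ℝ → V →L[ℝ] V,
            ContinuousOn M (Set.Icc 0 1) → FiniteQVar q M →
            M 0 = ContinuousLinearMap.id ℝ V → SolvesLinearODE Ω M →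
            ContinuousOn Mh (Set.Icc 0 1) → FiniteQVar q Mh →
            Mh 0 = ContinuousLinearMap.id ℝ V → SolvesLinearODE Ωh Mh →
            ∀ s t, 0 ≤ s → s ≤ t → t ≤ 1 →
              ‖(M t - M s) - (Mh t - Mh s)‖ ≤ C * ε * ω s t ^ (1 / q) := by
  set Y := sewingConst (2 / q)
  set n : ℕ := ⌈(c₀ + 1) * (2 * (1 + Y)) ^ q⌉₊ + 1
  set G : ℝ := n * 2 ^ n
  have hY : 0 ≤ Y := sewingConst_nonneg _
  refine ⟨G * (1 + G * |c₀| ^ (1 / q) + G * Y), by positivity, ?_⟩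
  intro V _ _ _ ε hε Ω Ωh ω _ _ hω hω01 hΩ hΩh hΩΩh M Mh hMc hMq hM0 hM hMhc hMhq hMh0 hMh
    s t hs hst ht
  have hq0 : 0 < q := by linarith
  have hω' := hω.isSuperadditiveOn
  obtain ⟨P, hPN, hP⟩ := hω.exists_subdivision_rpow_le hq0 (by positivity : 0 < 1 + Y)
  rw [hω01] at hPN
  have hOne : ∀ X : ℝ → V →L[ℝ] V, (∀ s t, 0 ≤ s → s ≤ t → t ≤ 1 →
      ‖X t - X s‖ ≤ ω s t ^ (1 / q)) → ControlledOn ω q 1 X 0 1 := fun X h x y hx hxy hy =>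
    (one_mul (ω x y ^ (1 / q))).symm ▸ h x y hx hxy hy
  have hΘ : ControlledOn ω q ε (Ω - Ωh) 0 1 := fun x y hx hxy hy => by
    simpa only [Pi.sub_apply, sub_sub_sub_comm] using hΩΩh x y hx hxy hy
  have hMG := hM.controlledOn_of_subdivision P hP hq0 hq2 hω' (hOne Ω hΩ) hMc hMq
    (hM0 ▸ ContinuousLinearMap.norm_id_le)
  have hMhG := hMh.controlledOn_of_subdivision P hP hq0 hq2 hω' (hOne Ωh hΩh) hMhc hMhq
    (hMh0 ▸ ContinuousLinearMap.norm_id_le)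
  rw [hPN] at hMG hMhG
  have hD := controlledOn_sub_of_subdivision P hP hq0 hq2 hω' hε (by positivity) (hOne Ω hΩ) hΘ
    hMG hMhG (hM0.trans hMh0.symm) (hMh0 ▸ ContinuousLinearMap.norm_id_le) hM hMh s t hs hst ht
  have hc₀ : 0 ≤ c₀ := hω01 ▸ hω'.nonneg 0 1 le_rfl zero_le_one le_rfl
  rw [hPN, hω01, Pi.sub_apply, Pi.sub_apply, sub_sub_sub_comm] at hD
  rwa [abs_of_nonneg hc₀]
end

section
/- Let V be a real Banach space, θ > 1, ε ≥ 0, let ω be a control function, and let A, B : Δ → V satisfy, for all 0 ≤ s ≤ u ≤ t ≤ 1: ‖A_{s,t} − A_{s,u} − A_{u,t}‖ ≤ ω(s,t)^θ, ‖B_{s,t} − B_{s,u} − B_{u,t}‖ ≤ ω(s,t)^θ, and ‖(A_{s,t} − A_{s,u} − A_{u,t}) − (B_{s,t} − B_{s,u} − B_{u,t})‖ ≤ ε ω(s,t)^θ. Suppose that for every (s,t) ∈ Δ the limits Â_{s,t} := lim_{|P| → 0} Σ_{i=1}^N A_{t_{i−1}, t_i} and B̂_{s,t} := lim_{|P| →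 0} Σ_{i=1}^N B_{t_{i−1}, t_i}, taken over finite partitions P = {s = t_0 < ⋯ < t_N = t} of [s,t] as the mesh tends to 0, exist. Then for all (s,t) ∈ Δ, ‖(Â_{s,t} − A_{s,t}) − (B̂_{s,t} − B_{s,t})‖ ≤ ε · 2^θ · ζ(θ) · ω(s,t)^θ. -/
/-!
STATEMENT 14: comparison of two almost rough paths (first level) with their associated
rough paths.
-/

universe u

/-- `ζ(θ) = ∑_{n=1}^∞ n^{-θ}`. -/
noncomputable def zetaR (θ : ℝ) : ℝ := ∑' n : ℕ, ((n : ℝ) + 1) ^ (-θ)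

/-- `L = lim_{|P| → 0} ∑_i A_{t_{i−1}, t_i}` over finite partitions `P` of `[s,t]`. -/
def PartSumLimit {V : Type u} [NormedAddCommGroup V]
    (A : ℝ → ℝ → V) (s t : ℝ) (L : V) : Prop :=
  ∀ ε > (0 : ℝ), ∃ δ > (0 : ℝ), ∀ P : Subdivision s t, P.mesh < δ →
    ‖(∑ i ∈ Finset.range P.N, A (P.pt i) (P.pt (i + 1))) - L‖ ≤ ε

/-!
Put `C := A - B`; its defect `C s t - C s u - C u t` is at most `ε ω(s,t)^θ`. In a partition of
`[s,t]` with `n + 1` interior points, superadditivity gives `∑ⱼ ω(tⱼ, tⱼ₊₂) ≤ 2 ω(s,t)`, so some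
interior point has `ω(tⱼ, tⱼ₊₂) ≤ 2 ω(s,t) / (n + 1)`; deleting it changes `∑ C` by at most
`ε 2^θ (n + 1)^(-θ) ω(s,t)^θ`. Deleting points one at a time down to the trivial partition bounds
`‖∑ C - C s t‖` by `ε 2^θ ζ(θ) ω(s,t)^θ` uniformly in the partition, and letting the mesh tend to
`0` turns `∑ C` into `Â - B̂`.
-/

open Finset

namespace IsControl

variable {ω : ℝ → ℝ → ℝ}

theorem nonneg (hω : IsControl ω) {s t : ℝ} (hs : 0 ≤ s) (hst : s ≤ t) (ht : t ≤ 1) :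
    0 ≤ ω s t :=
  hω.2.2.1 s t hs hst ht

theorem add_le (hω : IsControl ω) {s u t : ℝ} (hs : 0 ≤ s) (hsu : s ≤ u) (hut : u ≤ t)
    (ht : t ≤ 1) : ω s u + ω u t ≤ ω s t :=
  hω.2.2.2 s u t hs hsu hut ht

theorem mono_right (hω : IsControl ω) {s u t : ℝ} (hs : 0 ≤ s) (hsu : s ≤ u) (hut : u ≤ t)
    (ht : t ≤ 1) : ω s u ≤ ω s t := by
  linarith [hω.add_le hs hsu hut ht, hω.nonneg (hs.trans hsu) hut ht]

variable {p : ℕ → ℝ}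

theorem sum_le_two_mul (hω : IsControl ω) (hp : Monotone p) (hpI : ∀ i, p i ∈ Set.Icc (0 : ℝ) 1)
    (n : ℕ) :
    ∑ j ∈ range n, ω (p j) (p (j + 2)) ≤ 2 * ω (p 0) (p (n + 1)) := by
  have hp0 : ∀ i, p 0 ≤ p i := fun i => hp (Nat.zero_le i)
  -- Induction on the stronger bound `ω (p 0) (p n) + ω (p 0) (p (n + 1))`.
  have key : ∀ n, ∑ j ∈ range n, ω (p j) (p (j + 2)) ≤ ω (p 0) (p n) + ω (p 0) (p (n + 1)) := by
    intro n
    induction n with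
    | zero =>
      simpa using add_nonneg (hω.nonneg (hpI 0).1 le_rfl (hpI 0).2)
        (hω.nonneg (hpI 0).1 (hp0 1) (hpI 1).2)
    | succ n ih =>
      rw [sum_range_succ]
      linarith [hω.add_le (hpI 0).1 (hp0 n) (hp (by omega : n ≤ n + 2)) (hpI _).2]
  linarith [key n, hω.mono_right (hpI 0).1 (hp0 n) (hp n.le_succ) (hpI _).2]

theorem exists_le_two_mul_div (hω : IsControl ω) (hp : Monotone p)
    (hpI : ∀ i, p i ∈ Set.Icc (0 : ℝ) 1) (n : ℕ) :
    ∃ j ≤ n, ω (p j) (p (j + 2)) ≤ 2 * ω (p 0) (p (n + 2)) / (n + 1) := by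
  have hsum : ∑ j ∈ range (n + 1), ω (p j) (p (j + 2))
      ≤ ∑ _j ∈ range (n + 1), 2 * ω (p 0) (p (n + 2)) / (n + 1) := by
    rw [sum_const, card_range, nsmul_eq_mul]
    push_cast
    rw [mul_div_cancel₀ _ (by positivity)]
    exact hω.sum_le_two_mul hp hpI (n + 1)
  obtain ⟨j, hj, hle⟩ := exists_le_of_sum_le nonempty_range_add_one hsum
  exact ⟨j, Nat.lt_succ_iff.mp (mem_range.mp hj), hle⟩

end IsControl

/-- The increasing enumeration of `ℕ \ {j + 1}`. -/
def skipIndex (j i : ℕ) : ℕ := if i ≤ j then i else i + 1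

theorem monotone_skipIndex (j : ℕ) : Monotone (skipIndex j) := by
  intro a b hab
  unfold skipIndex
  split_ifs <;> omega

theorem sum_range_succ_eq_sum_skipIndex_add {α M : Type*} [AddCommGroup M] (F : α → α → M)
    (p : ℕ → α) {j m : ℕ} (hjm : j < m) :
    ∑ i ∈ range (m + 1), F (p i) (p (i + 1)) =
      ∑ i ∈ range m, F (p (skipIndex j i)) (p (skipIndex j (i + 1))) +
        (F (p j) (p (j + 1)) + F (p (j + 1)) (p (j + 2)) - F (p j) (p (j + 2))) := by
  induction m, hjm using Nat.le_induction with
  | base =>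
    have hlow : ∀ i ∈ range j,
        F (p (skipIndex j i)) (p (skipIndex j (i + 1))) = F (p i) (p (i + 1)) := by
      intro i hi
      have hi : i < j := mem_range.mp hi
      simp only [skipIndex, if_pos hi.le, if_pos (Nat.succ_le_of_lt hi)]
    rw [sum_range_succ, sum_range_succ, sum_range_succ, sum_congr rfl hlow]
    simp only [skipIndex, if_pos le_rfl, if_neg (Nat.not_succ_le_self j)]
    abel
  | succ m hm ih =>
    rw [sum_range_succ, ih, sum_range_succ]
    simp only [skipIndex, if_neg (by omega : ¬m ≤ j), if_neg (by omega : ¬m + 1 ≤ j)]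
    abel

theorem norm_sum_sub_le_of_defect {V : Type*} [SeminormedAddCommGroup V] {θ ε : ℝ}
    (hθ : 0 ≤ θ) (hε : 0 ≤ ε) {ω : ℝ → ℝ → ℝ} (hω : IsControl ω) (C : ℝ → ℝ → V)
    (hC : ∀ s u t, 0 ≤ s → s ≤ u → u ≤ t → t ≤ 1 → ‖C s t - C s u - C u t‖ ≤ ε * ω s t ^ θ)
    (n : ℕ) {p : ℕ → ℝ} (hp : Monotone p) (hpI : ∀ i, p i ∈ Set.Icc (0 : ℝ) 1) :
    ‖∑ i ∈ range (n + 1), C (p i) (p (i + 1)) - C (p 0) (p (n + 1))‖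
      ≤ ε * 2 ^ θ * (∑ k ∈ range n, ((k : ℝ) + 1) ^ (-θ)) * ω (p 0) (p (n + 1)) ^ θ := by
  induction n generalizing p with
  | zero => simp
  | succ n ih =>
    obtain ⟨j, hjn, hj⟩ := hω.exists_le_two_mul_div hp hpI n
    set W := ω (p 0) (p (n + 2))
    have hW : 0 ≤ W := hω.nonneg (hpI 0).1 (hp (Nat.zero_le _)) (hpI _).2
    have hq := ih (hp.comp (monotone_skipIndex j)) (fun i => hpI _)
    have hfirst : skipIndex j 0 = 0 := if_pos (Nat.zero_le j)
    have hlast : skipIndex j (n + 1) = n + 2 := if_neg (by omega)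
    simp only [Function.comp_apply, hfirst, hlast] at hq
    have hn : (0 : ℝ) < n + 1 := by positivity
    have hdefect : ‖C (p j) (p (j + 1)) + C (p (j + 1)) (p (j + 2)) - C (p j) (p (j + 2))‖
        ≤ ε * (2 ^ θ * ((n : ℝ) + 1) ^ (-θ) * W ^ θ) :=
      calc _ = ‖C (p j) (p (j + 2)) - C (p j) (p (j + 1)) - C (p (j + 1)) (p (j + 2))‖ := by
            rw [← norm_neg]; congr 1; abel
        _ ≤ ε * ω (p j) (p (j + 2)) ^ θ :=
            hC _ _ _ (hpI j).1 (hp j.le_succ) (hp (j + 1).le_succ) (hpI _).2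
        _ ≤ ε * (2 * W / (n + 1)) ^ θ := by
            gcongr
            exact hω.nonneg (hpI j).1 (hp (by omega)) (hpI _).2
        _ = ε * (2 ^ θ * ((n : ℝ) + 1) ^ (-θ) * W ^ θ) := by
            rw [Real.div_rpow (by positivity) hn.le, Real.mul_rpow zero_le_two hW,
              Real.rpow_neg hn.le]
            ring
    rw [sum_range_succ_eq_sum_skipIndex_add C p (by omega : j < n + 1)]
    calc _ ≤ ‖∑ i ∈ range (n + 1), C (p (skipIndex j i)) (p (skipIndex j (i + 1)))
            - C (p 0) (p (n + 2))‖
          + ‖C (p j) (p (j + 1)) + C (p (j + 1)) (p (j + 2)) - C (p j) (p (j + 2))‖ := by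
          rw [add_sub_right_comm]
          exact norm_add_le _ _
      _ ≤ ε * 2 ^ θ * (∑ k ∈ range n, ((k : ℝ) + 1) ^ (-θ)) * W ^ θ
          + ε * (2 ^ θ * ((n : ℝ) + 1) ^ (-θ) * W ^ θ) := add_le_add hq hdefect
      _ = _ := by rw [sum_range_succ]; ring

theorem summable_nat_add_one_rpow_neg {θ : ℝ} (hθ : 1 < θ) :
    Summable fun k : ℕ => ((k : ℝ) + 1) ^ (-θ) := by
  have h := (summable_nat_add_iff 1).2 (Real.summable_nat_rpow.2 (by linarith : -θ < -1))
  simpa using h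

namespace Subdivision

variable {s t : ℝ}

def clampedPt (P : Subdivision s t) (i : ℕ) : ℝ := P.pt (min i P.N)

theorem monotone_clampedPt (P : Subdivision s t) : Monotone P.clampedPt := by
  refine monotone_nat_of_le_succ fun i => ?_
  unfold clampedPt
  rcases lt_or_ge i P.N with hi | hi
  · rw [min_eq_left hi.le, min_eq_left hi]
    exact P.mono i hi
  · rw [min_eq_right hi, min_eq_right (hi.trans i.le_succ)]

theorem clampedPt_zero (P : Subdivision s t) : P.clampedPt 0 = s := by
  simp [clampedPt, P.first]

theorem clampedPt_of_le (P : Subdivision s t) {i : ℕ} (hi : P.N ≤ i) : P.clampedPt i = t := by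
  rw [clampedPt, min_eq_right hi, P.last]

theorem clampedPt_mem_Icc (P : Subdivision s t) (i : ℕ) : P.clampedPt i ∈ Set.Icc s t := by
  constructor
  · calc s = P.clampedPt 0 := P.clampedPt_zero.symm
      _ ≤ P.clampedPt i := P.monotone_clampedPt (Nat.zero_le i)
  · calc P.clampedPt i ≤ P.clampedPt (i + P.N) := P.monotone_clampedPt (Nat.le_add_right i P.N)
      _ = t := P.clampedPt_of_le (Nat.le_add_left P.N i)

theorem norm_sum_sub_le_of_defect {V : Type*} [SeminormedAddCommGroup V] {θ ε : ℝ}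
    (hθ : 1 < θ) (hε : 0 ≤ ε) {ω : ℝ → ℝ → ℝ} (hω : IsControl ω) (C : ℝ → ℝ → V)
    (hC : ∀ s u t, 0 ≤ s → s ≤ u → u ≤ t → t ≤ 1 → ‖C s t - C s u - C u t‖ ≤ ε * ω s t ^ θ)
    (P : Subdivision s t) (hs : 0 ≤ s) (ht : t ≤ 1) :
    ‖∑ i ∈ range P.N, C (P.pt i) (P.pt (i + 1)) - C s t‖ ≤ ε * 2 ^ θ * zetaR θ * ω s t ^ θ := by
  obtain ⟨n, hn⟩ := Nat.exists_eq_add_one.2 P.pos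
  have hpI : ∀ i, P.clampedPt i ∈ Set.Icc (0 : ℝ) 1 := fun i =>
    ⟨hs.trans (P.clampedPt_mem_Icc i).1, (P.clampedPt_mem_Icc i).2.trans ht⟩
  have hbound := _root_.norm_sum_sub_le_of_defect (by linarith) hε hω C hC n
    P.monotone_clampedPt hpI
  have hsum : ∑ i ∈ range (n + 1), C (P.clampedPt i) (P.clampedPt (i + 1))
      = ∑ i ∈ range P.N, C (P.pt i) (P.pt (i + 1)) := by
    rw [hn]
    refine sum_congr rfl fun i hi => ?_
    have hi := mem_range.mp hi
    simp only [clampedPt, hn, min_eq_left hi.le, min_eq_left (Nat.succ_le_of_lt hi)]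
  rw [hsum, P.clampedPt_zero, P.clampedPt_of_le hn.le] at hbound
  refine hbound.trans ?_
  have hpartial : ∑ k ∈ range n, ((k : ℝ) + 1) ^ (-θ) ≤ zetaR θ :=
    (summable_nat_add_one_rpow_neg hθ).sum_le_tsum _ fun k _ => by positivity
  have hωst : 0 ≤ ω s t := hω.nonneg hs (P.clampedPt_zero ▸ (P.clampedPt_mem_Icc 0).2) ht
  gcongr

theorem exists_mesh_lt {δ : ℝ} (hst : s ≤ t) (hδ : 0 < δ) : ∃ P : Subdivision s t, P.mesh < δ := by
  obtain ⟨n, hn⟩ := exists_nat_gt ((t - s) / δ)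
  have hn1 : (0 : ℝ) < n + 1 := by positivity
  have hstep : 0 ≤ (t - s) / (n + 1) := div_nonneg (sub_nonneg.2 hst) hn1.le
  refine ⟨⟨n + 1, fun i => s + i * ((t - s) / (n + 1)), n.succ_pos, by simp, ?_, ?_⟩, ?_⟩
  · push_cast
    field_simp
    ring
  · intro i _
    push_cast
    linarith
  · rw [mesh, sup'_lt_iff]
    intro i _
    push_cast
    rw [show s + (i + 1) * ((t - s) / (n + 1)) - (s + i * ((t - s) / (n + 1)))
      = (t - s) / (n + 1) by ring, div_lt_iff₀ hn1]
    rw [div_lt_iff₀ hδ] at hn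
    nlinarith

end Subdivision

namespace PartSumLimit

variable {V : Type*} [NormedAddCommGroup V] {s t : ℝ}

theorem sub {A B : ℝ → ℝ → V} {a b : V} (hA : PartSumLimit A s t a)
    (hB : PartSumLimit B s t b) : PartSumLimit (fun x y => A x y - B x y) s t (a - b) := by
  intro η hη
  obtain ⟨δA, hδA, hA⟩ := hA (η / 2) (by positivity)
  obtain ⟨δB, hδB, hB⟩ := hB (η / 2) (by positivity)
  refine ⟨min δA δB, lt_min hδA hδB, fun P hP => ?_⟩
  rw [sum_sub_distrib, sub_sub_sub_comm]
  calc _ ≤ ‖∑ i ∈ range P.N, A (P.pt i) (P.pt (i + 1)) - a‖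
        + ‖∑ i ∈ range P.N, B (P.pt i) (P.pt (i + 1)) - b‖ := norm_sub_le _ _
    _ ≤ η / 2 + η / 2 :=
        add_le_add (hA P (hP.trans_le (min_le_left _ _))) (hB P (hP.trans_le (min_le_right _ _)))
    _ = η := add_halves η

theorem norm_sub_le {C : ℝ → ℝ → V} {L x : V} {K : ℝ} (hC : PartSumLimit C s t L)
    (hst : s ≤ t)
    (hK : ∀ P : Subdivision s t, ‖∑ i ∈ range P.N, C (P.pt i) (P.pt (i + 1)) - x‖ ≤ K) :
    ‖L - x‖ ≤ K := by
  refine le_of_forall_pos_le_add fun η hη => ?_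
  obtain ⟨δ, hδ, hP⟩ := hC η hη
  obtain ⟨P, hPδ⟩ := Subdivision.exists_mesh_lt hst hδ
  calc ‖L - x‖ = ‖(∑ i ∈ range P.N, C (P.pt i) (P.pt (i + 1)) - x)
        - (∑ i ∈ range P.N, C (P.pt i) (P.pt (i + 1)) - L)‖ := by rw [sub_sub_sub_cancel_left]
    _ ≤ K + η := (_root_.norm_sub_le _ _).trans (add_le_add (hK P) (hP P hPδ))

end PartSumLimit

theorem statement14_general (θ ε : ℝ) (hθ : 1 < θ) (hε : 0 ≤ ε)
    (V : Type u) [NormedAddCommGroup V]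
    (ω : ℝ → ℝ → ℝ) (hω : IsControl ω)
    (A B Ahat Bhat : ℝ → ℝ → V)
    (hAB : ∀ s u t, 0 ≤ s → s ≤ u → u ≤ t → t ≤ 1 →
      ‖(A s t - A s u - A u t) - (B s t - B s u - B u t)‖ ≤ ε * ω s t ^ θ)
    (hAhat : ∀ s t, 0 ≤ s → s ≤ t → t ≤ 1 → PartSumLimit A s t (Ahat s t))
    (hBhat : ∀ s t, 0 ≤ s → s ≤ t → t ≤ 1 → PartSumLimit B s t (Bhat s t)) :
    ∀ s t, 0 ≤ s → s ≤ t → t ≤ 1 →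
      ‖(Ahat s t - A s t) - (Bhat s t - B s t)‖
        ≤ ε * 2 ^ θ * zetaR θ * ω s t ^ θ := by
  intro s t hs hst ht
  have hdefect : ∀ s u t, 0 ≤ s → s ≤ u → u ≤ t → t ≤ 1 →
      ‖(A s t - B s t) - (A s u - B s u) - (A u t - B u t)‖ ≤ ε * ω s t ^ θ := by
    intro s u t hs hsu hut ht
    convert hAB s u t hs hsu hut ht using 2
    abel
  have hlimit := (hAhat s t hs hst ht).sub (hBhat s t hs hst ht)
  rw [sub_sub_sub_comm]
  exact hlimit.norm_sub_le hst fun P =>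
    P.norm_sum_sub_le_of_defect hθ hε hω (fun x y => A x y - B x y) hdefect hs ht

/-- If two first-level almost rough paths `A, B` have `ε`-close defects,
then `‖(Â_{s,t} − A_{s,t}) − (B̂_{s,t} − B_{s,t})‖ ≤ ε 2^θ ζ(θ) ω(s,t)^θ`. -/
theorem statement14 (θ ε : ℝ) (hθ : 1 < θ) (hε : 0 ≤ ε)
    (V : Type u) [NormedAddCommGroup V] [NormedSpace ℝ V] [CompleteSpace V]
    (ω : ℝ → ℝ → ℝ) (hω : IsControl ω)
    (A B Ahat Bhat : ℝ → ℝ → V)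
    (hA : ∀ s u t, 0 ≤ s → s ≤ u → u ≤ t → t ≤ 1 →
      ‖A s t - A s u - A u t‖ ≤ ω s t ^ θ)
    (hB : ∀ s u t, 0 ≤ s → s ≤ u → u ≤ t → t ≤ 1 →
      ‖B s t - B s u - B u t‖ ≤ ω s t ^ θ)
    (hAB : ∀ s u t, 0 ≤ s → s ≤ u → u ≤ t → t ≤ 1 →
      ‖(A s t - A s u - A u t) - (B s t - B s u - B u t)‖ ≤ ε * ω s t ^ θ)
    (hAhat : ∀ s t, 0 ≤ s → s ≤ t → t ≤ 1 → PartSumLimit A s t (Ahat s t))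
    (hBhat : ∀ s t, 0 ≤ s → s ≤ t → t ≤ 1 → PartSumLimit B s t (Bhat s t)) :
    ∀ s t, 0 ≤ s → s ≤ t → t ≤ 1 →
      ‖(Ahat s t - A s t) - (Bhat s t - B s t)‖
        ≤ ε * 2 ^ θ * zetaR θ * ω s t ^ θ :=
  statement14_general θ ε hθ hε V ω hω A B Ahat Bhat hAB hAhat hBhat
end
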